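/- arXiv:2502.17983 — 3 statements merged into one kernel-verified Lean document; each statement's English description precedes it below -/
import Mathlib

section
/- Let V*_real and V*_DT be the optimal value functions of two finite MDPs sharing state space S, action space A, and discount γ ∈ (0,1), with transition kernels P, P' and rewards R, R' respectively, and let d̄ be the DT bisimulation metric (the fixed point of d ↦ max_a { |R(s_i,a) − R'(s_j,a)| + γ W₁(P(·|s_i,a), P'(·|s_j,a); d) }). Then for all states s_i, s_j: |V*_real(s_i) − V*_DT(s_j)| ≤ d̄(s_i, s_j). -/
open Finset Filter

variable {S A : Type*}

/-- A coupling of two distributions on a finite set: nonnegative matrix with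
row marginals `P` and column marginals `Q`. -/
def IsCoupling [Fintype S] (P Q : S → ℝ) (lam : S → S → ℝ) : Prop :=
  (∀ i j, 0 ≤ lam i j) ∧ (∀ i, ∑ j, lam i j = P i) ∧ (∀ j, ∑ i, lam i j = Q j)

/-- The 1-Wasserstein distance on a finite set with cost function `d`:
the minimal transport cost over all couplings of `P` and `Q`. -/
noncomputable def W1 [Fintype S] (P Q : S → ℝ) (d : S → S → ℝ) : ℝ :=
  sInf {c : ℝ | ∃ lam, IsCoupling P Q lam ∧ c = ∑ i, ∑ j, lam i j * d i j}

/-- `P` is a probability distribution on the finite set `S`. -/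
def IsProbDist [Fintype S] (P : S → ℝ) : Prop := (∀ i, 0 ≤ P i) ∧ ∑ i, P i = 1

/-- Total variation distance between two distributions on a finite set. -/
noncomputable def TVdist [Fintype S] (P Q : S → ℝ) : ℝ := (1/2) * ∑ i, |P i - Q i|

/-- The Bellman optimality operator of a finite MDP. -/
noncomputable def bellman [Fintype S] [Fintype A] [Nonempty A]
    (P : S → A → S → ℝ) (R : S → A → ℝ) (γ : ℝ) (V : S → ℝ) : S → ℝ :=
  fun s => ⨆ a : A, (R s a + γ * ∑ t, P s a t * V t)

/-- The DT-BSM operator `F` between two MDPs sharing state and action spaces. -/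
noncomputable def Fop [Fintype S] [Fintype A] [Nonempty A]
    (P P' : S → A → S → ℝ) (R R' : S → A → ℝ) (γ : ℝ) (d : S → S → ℝ) : S → S → ℝ :=
  fun i j => ⨆ a : A, (|R i a - R' j a| + γ * W1 (P i a) (P' j a) d)

/-!
Let `M` be the largest excess `|V(s) - V'(s')| - d̄(s, s')`. Couple `P(·|s,a)` with `P'(·|s',a)`
almost optimally: the expected value gaps are then bounded by the transport cost of `d̄` plus `M`,
so the fixed-point equations for `V`, `V'` and `d̄` give `M ≤ γ M`, whence `M ≤ 0`.
-/

lemma abs_ciSup_sub_ciSup_le {ι : Type*} [Finite ι] [Nonempty ι] {f g : ι → ℝ} {C : ℝ}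
    (h : ∀ a, |f a - g a| ≤ C) : |(⨆ a, f a) - ⨆ a, g a| ≤ C := by
  refine abs_sub_le_iff.mpr ⟨?_, ?_⟩ <;> rw [sub_le_iff_le_add] <;> refine ciSup_le fun a => ?_
  · linarith [(abs_sub_le_iff.mp (h a)).1, le_ciSup (Finite.bddAbove_range g) a]
  · linarith [(abs_sub_le_iff.mp (h a)).2, le_ciSup (Finite.bddAbove_range f) a]

lemma le_of_forall_le_add_imp_le_add_mul {ι : Type*} [Finite ι] {f g : ι → ℝ} {γ : ℝ}
    (hγ : γ < 1) (h : ∀ c, (∀ x, f x ≤ g x + c) → ∀ x, f x ≤ g x + γ * c) (x : ι) :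
    f x ≤ g x := by
  have : Nonempty ι := ⟨x⟩
  obtain ⟨y, hy⟩ := Finite.exists_max fun x => f x - g x
  have hmax : ∀ x, f x ≤ g x + (f y - g y) := fun x => by linarith [hy x]
  have hcontr := h _ hmax y
  have : f y - g y ≤ 0 := by nlinarith
  linarith [hmax x]

section Coupling

variable [Fintype S]

lemma isCoupling_mul {P Q : S → ℝ} (hP : IsProbDist P) (hQ : IsProbDist Q) :
    IsCoupling P Q (fun i j => P i * Q j) := by
  refine ⟨fun i j => mul_nonneg (hP.1 i) (hQ.1 j), fun i => ?_, fun j => ?_⟩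
  · rw [← mul_sum, hQ.2, mul_one]
  · rw [← sum_mul, hP.2, one_mul]

lemma exists_isCoupling_cost_lt_W1_add {P Q : S → ℝ} (hP : IsProbDist P) (hQ : IsProbDist Q)
    (d : S → S → ℝ) {ε : ℝ} (hε : 0 < ε) :
    ∃ lam, IsCoupling P Q lam ∧ ∑ i, ∑ j, lam i j * d i j < W1 P Q d + ε := by
  obtain ⟨_, ⟨lam, hlam, rfl⟩, hlt⟩ :=
    Real.lt_sInf_add_pos (s := {c | ∃ lam, IsCoupling P Q lam ∧ c = ∑ i, ∑ j, lam i j * d i j})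
      ⟨_, _, isCoupling_mul hP hQ, rfl⟩ hε
  exact ⟨lam, hlam, hlt⟩

namespace IsCoupling

variable {P Q : S → ℝ} {lam : S → S → ℝ}

lemma sum_sum_eq (hlam : IsCoupling P Q lam) : ∑ i, ∑ j, lam i j = ∑ i, P i :=
  sum_congr rfl fun i _ => hlam.2.1 i

lemma sum_mul_sub_sum_mul (hlam : IsCoupling P Q lam) (V W : S → ℝ) :
    ∑ i, P i * V i - ∑ j, Q j * W j = ∑ i, ∑ j, lam i j * (V i - W j) := by
  simp_rw [mul_sub, sum_sub_distrib, ← hlam.2.1, ← hlam.2.2, sum_mul]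
  rw [sum_comm (f := fun j i => lam i j * W j)]

lemma abs_sum_mul_sub_sum_mul_le (hlam : IsCoupling P Q lam) (hP : IsProbDist P)
    {V W : S → ℝ} {d : S → S → ℝ} {c : ℝ} (h : ∀ i j, |V i - W j| ≤ d i j + c) :
    |∑ i, P i * V i - ∑ j, Q j * W j| ≤ ∑ i, ∑ j, lam i j * d i j + c :=
  calc |∑ i, P i * V i - ∑ j, Q j * W j|
      = |∑ i, ∑ j, lam i j * (V i - W j)| := by rw [hlam.sum_mul_sub_sum_mul]
    _ ≤ ∑ i, ∑ j, |lam i j * (V i - W j)| :=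
      (abs_sum_le_sum_abs _ _).trans (sum_le_sum fun i _ => abs_sum_le_sum_abs _ _)
    _ ≤ ∑ i, ∑ j, lam i j * (d i j + c) := by
      refine sum_le_sum fun i _ => sum_le_sum fun j _ => ?_
      rw [abs_mul, abs_of_nonneg (hlam.1 i j)]
      exact mul_le_mul_of_nonneg_left (h i j) (hlam.1 i j)
    _ = ∑ i, ∑ j, lam i j * d i j + c := by
      simp_rw [mul_add, sum_add_distrib, ← sum_mul, hlam.sum_sum_eq, hP.2, one_mul]

end IsCoupling

/-- The easy half of Kantorovich–Rubinstein duality, with slack `c` in the Lipschitz condition. -/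
lemma abs_sum_mul_sub_sum_mul_le_W1_add {P Q : S → ℝ} (hP : IsProbDist P) (hQ : IsProbDist Q)
    {V W : S → ℝ} {d : S → S → ℝ} {c : ℝ} (h : ∀ i j, |V i - W j| ≤ d i j + c) :
    |∑ i, P i * V i - ∑ j, Q j * W j| ≤ W1 P Q d + c := by
  refine le_of_forall_pos_lt_add fun ε hε => ?_
  obtain ⟨lam, hlam, hcost⟩ := exists_isCoupling_cost_lt_W1_add hP hQ d hε
  linarith [hlam.abs_sum_mul_sub_sum_mul_le hP h]

end Coupling

lemma abs_bellman_sub_bellman_le_Fop_add [Fintype S] [Fintype A] [Nonempty A]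
    {P P' : S → A → S → ℝ} {R R' : S → A → ℝ} {γ : ℝ} (hγ : 0 ≤ γ)
    (hP : ∀ s a, IsProbDist (P s a)) (hP' : ∀ s a, IsProbDist (P' s a))
    {V W : S → ℝ} {d : S → S → ℝ} {c : ℝ} (h : ∀ i j, |V i - W j| ≤ d i j + c) (i j : S) :
    |bellman P R γ V i - bellman P' R' γ W j| ≤ Fop P P' R R' γ d i j + γ * c := by
  refine abs_ciSup_sub_ciSup_le fun a => ?_
  have hW1 := abs_sum_mul_sub_sum_mul_le_W1_add (hP i a) (hP' j a) h
  have hFop : |R i a - R' j a| + γ * W1 (P i a) (P' j a) d ≤ Fop P P' R R' γ d i j :=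
    le_ciSup (f := fun a => |R i a - R' j a| + γ * W1 (P i a) (P' j a) d)
      (Finite.bddAbove_range _) a
  calc |R i a + γ * ∑ t, P i a t * V t - (R' j a + γ * ∑ t, P' j a t * W t)|
      = |(R i a - R' j a) + γ * (∑ t, P i a t * V t - ∑ t, P' j a t * W t)| := by
        congr 1; ring
    _ ≤ |R i a - R' j a| + γ * |∑ t, P i a t * V t - ∑ t, P' j a t * W t| :=
        (abs_add_le _ _).trans_eq (by rw [abs_mul, abs_of_nonneg hγ])
    _ ≤ |R i a - R' j a| + γ * (W1 (P i a) (P' j a) d + c) := by gcongr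
    _ ≤ Fop P P' R R' γ d i j + γ * c := by linarith

theorem optimal_value_diff_le_DTBSM_general [Fintype S] [Fintype A] [Nonempty A]
    (P P' : S → A → S → ℝ) (R R' : S → A → ℝ) (γ : ℝ)
    (hγ : γ ∈ Set.Ioo (0:ℝ) 1)
    (hP : ∀ s a, IsProbDist (P s a)) (hP' : ∀ s a, IsProbDist (P' s a))
    (Vreal VDT : S → ℝ)
    (hVreal : bellman P R γ Vreal = Vreal)
    (hVDT : bellman P' R' γ VDT = VDT)
    (dbar : S → S → ℝ)
    (hdbar_fix : Fop P P' R R' γ dbar = dbar) :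
    ∀ i j, |Vreal i - VDT j| ≤ dbar i j := by
  intro i j
  refine le_of_forall_le_add_imp_le_add_mul (f := fun p : S × S => |Vreal p.1 - VDT p.2|)
    (g := fun p => dbar p.1 p.2) hγ.2 (fun c hc p => ?_) (i, j)
  calc |Vreal p.1 - VDT p.2| = |bellman P R γ Vreal p.1 - bellman P' R' γ VDT p.2| := by
        rw [hVreal, hVDT]
    _ ≤ Fop P P' R R' γ dbar p.1 p.2 + γ * c :=
        abs_bellman_sub_bellman_le_Fop_add hγ.1.le hP hP' (fun t u => hc (t, u)) p.1 p.2
    _ = dbar p.1 p.2 + γ * c := by rw [hdbar_fix]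

theorem optimal_value_diff_le_DTBSM [Fintype S] [Nonempty S] [Fintype A] [Nonempty A]
    (P P' : S → A → S → ℝ) (R R' : S → A → ℝ) (γ Rmax : ℝ)
    (hγ : γ ∈ Set.Ioo (0:ℝ) 1)
    (hP : ∀ s a, IsProbDist (P s a)) (hP' : ∀ s a, IsProbDist (P' s a))
    (hRmax : Rmax = ⨆ i : S, ⨆ j : S, ⨆ a : A, |R i a - R' j a|)
    (Vreal VDT : S → ℝ)
    (hVreal : bellman P R γ Vreal = Vreal)
    (hVDT : bellman P' R' γ VDT = VDT)
    (dbar : S → S → ℝ)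
    (hdbar_mem : ∀ i j, dbar i j ∈ Set.Icc (0:ℝ) (Rmax / (1 - γ)))
    (hdbar_fix : Fop P P' R R' γ dbar = dbar) :
    ∀ i j, |Vreal i - VDT j| ≤ dbar i j :=
  optimal_value_diff_le_DTBSM_general P P' R R' γ hγ hP hP' Vreal VDT hVreal hVDT dbar hdbar_fix
end

section
/- The approximants d_n of the DT bisimulation metric satisfy the quadrilateral inequality: for all states s_i, s_j, s_k, s_l in S and all n ∈ ℕ, d_n(s_i, s_l) ≤ d_n(s_i, s_j) + d_n(s_k, s_j) + d_n(s_k, s_l), where the first argument of d_n refers to a state of the real MDP and the second argument to a state of the DT MDP. -/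
open Finset Filter

variable {S A : Type*}

/-!
Induction on `n`. The reward terms satisfy the quadrilateral inequality by the triangle
inequality for `|·|`. For the transport terms, couplings of the three pairs of next-state
distributions are glued along their shared marginals into one joint law of `(x, y, z, w)`;
its `(x, w)`-marginal couples the outer pair, and integrating the quadrilateral inequality
of `d n` against the joint law bounds its cost by the sum of the three costs.
-/

section Gluing

variable {X Y Z : Type*} [Fintype X] [Fintype Z]

theorem exists_glue (α : X → Y → ℝ) (β : Y → Z → ℝ)
    (hα : ∀ x y, 0 ≤ α x y) (hβ : ∀ y z, 0 ≤ β y z)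
    (hαβ : ∀ y, ∑ x, α x y = ∑ z, β y z) :
    ∃ τ : X → Y → Z → ℝ, (∀ x y z, 0 ≤ τ x y z) ∧
      (∀ x y, ∑ z, τ x y z = α x y) ∧ (∀ y z, ∑ x, τ x y z = β y z) := by
  set m : Y → ℝ := fun y => ∑ z, β y z
  have hα_zero : ∀ x y, m y = 0 → α x y = 0 := fun x y hy =>
    (sum_eq_zero_iff_of_nonneg fun x _ => hα x y).1 ((hαβ y).trans hy) x (mem_univ x)
  have hβ_zero : ∀ y z, m y = 0 → β y z = 0 := fun y z hy =>
    (sum_eq_zero_iff_of_nonneg fun z _ => hβ y z).1 hy z (mem_univ z)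
  -- `x` and `z` conditionally independent given `y`; where `m y = 0` both factors vanish,
  -- so the junk value of the division does no harm
  refine ⟨fun x y z => α x y * β y z / m y,
    fun x y z => div_nonneg (mul_nonneg (hα x y) (hβ y z)) (sum_nonneg fun z _ => hβ y z),
    fun x y => ?_, fun y z => ?_⟩
  · rw [← sum_div, ← mul_sum]
    exact mul_div_cancel_of_imp (hα_zero x y)
  · rw [← sum_div, ← sum_mul, hαβ y, mul_comm]
    exact mul_div_cancel_of_imp (hβ_zero y z)

end Gluing

section Transport

variable [Fintype S]

def transportCost (lam d : S → S → ℝ) : ℝ := ∑ i, ∑ j, lam i j * d i j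

theorem exists_isCoupling {P Q : S → ℝ} (hP : IsProbDist P) (hQ : IsProbDist Q) :
    ∃ lam, IsCoupling P Q lam :=
  ⟨fun i j => P i * Q j, fun i j => mul_nonneg (hP.1 i) (hQ.1 j),
    fun i => by rw [← mul_sum, hQ.2, mul_one], fun j => by rw [← sum_mul, hP.2, one_mul]⟩

theorem W1_nonneg (P Q : S → ℝ) {d : S → S → ℝ} (hd : ∀ i j, 0 ≤ d i j) : 0 ≤ W1 P Q d := by
  refine Real.sInf_nonneg ?_
  rintro _ ⟨lam, hlam, rfl⟩
  exact sum_nonneg fun i _ => sum_nonneg fun j _ => mul_nonneg (hlam.1 i j) (hd i j)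

theorem W1_le_transportCost {P Q : S → ℝ} {d lam : S → S → ℝ} (hd : ∀ i j, 0 ≤ d i j)
    (hlam : IsCoupling P Q lam) : W1 P Q d ≤ transportCost lam d := by
  refine csInf_le ⟨0, ?_⟩ ⟨lam, hlam, rfl⟩
  rintro _ ⟨lam', hlam', rfl⟩
  exact sum_nonneg fun i _ => sum_nonneg fun j _ => mul_nonneg (hlam'.1 i j) (hd i j)

theorem le_W1 {P Q : S → ℝ} {d : S → S → ℝ} {c : ℝ} (hne : ∃ lam, IsCoupling P Q lam)
    (h : ∀ lam, IsCoupling P Q lam → c ≤ transportCost lam d) : c ≤ W1 P Q d := by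
  obtain ⟨lam₀, hlam₀⟩ := hne
  refine le_csInf ⟨_, lam₀, hlam₀, rfl⟩ ?_
  rintro _ ⟨lam, hlam, rfl⟩
  exact h lam hlam

theorem exists_isCoupling_transportCost_le_of_quadrilateral {P₁ P₂ Q₁ Q₂ : S → ℝ}
    {d lam₁ lam₂ lam₃ : S → S → ℝ} (hquad : ∀ x y z w, d x w ≤ d x y + d z y + d z w)
    (h₁ : IsCoupling P₁ Q₁ lam₁) (h₂ : IsCoupling P₂ Q₁ lam₂) (h₃ : IsCoupling P₂ Q₂ lam₃) :
    ∃ ν, IsCoupling P₁ Q₂ ν ∧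
      transportCost ν d ≤ transportCost lam₁ d + transportCost lam₂ d + transportCost lam₃ d := by
  obtain ⟨τ, hτ, hτ_xy, hτ_yz⟩ := exists_glue lam₁ (fun y z => lam₂ z y) h₁.1
    (fun y z => h₂.1 z y) fun y => by rw [h₁.2.2, h₂.2.2]
  obtain ⟨σ, hσ, hσ_xyz, hσ_zw⟩ := exists_glue (fun (p : S × S) z => τ p.1 p.2 z) lam₃
    (fun p z => hτ _ _ z) h₃.1 fun z => by
      rw [Fintype.sum_prod_type, sum_comm]
      simp only [hτ_yz, h₂.2.1, h₃.2.1]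
  -- `σ (x, y) z w` is a joint law whose `(x, y)`, `(z, y)` and `(z, w)` marginals are the
  -- three given couplings
  let E : (S × S → S → S → ℝ) → ℝ := fun f => ∑ p, ∑ z, ∑ w, σ p z w * f p z w
  have hE₁ : E (fun p _ _ => d p.1 p.2) = transportCost lam₁ d := by
    simp only [E, ← sum_mul, hσ_xyz, hτ_xy]
    rw [Fintype.sum_prod_type]
    rfl
  have hE₂ : E (fun p z _ => d z p.2) = transportCost lam₂ d := by
    simp only [E, ← sum_mul, hσ_xyz]
    rw [Fintype.sum_prod_type, sum_comm, transportCost,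
      sum_comm (f := fun z y => lam₂ z y * d z y)]
    refine sum_congr rfl fun y _ => ?_
    rw [sum_comm]
    simp only [← sum_mul, hτ_yz]
  have hE₃ : E (fun _ z w => d z w) = transportCost lam₃ d := by
    simp only [E]
    rw [sum_comm]
    refine sum_congr rfl fun z _ => ?_
    rw [sum_comm]
    simp only [← sum_mul, hσ_zw]
  refine ⟨fun x w => ∑ y, ∑ z, σ (x, y) z w, ⟨fun x w => ?_, fun x => ?_, fun w => ?_⟩, ?_⟩
  · exact sum_nonneg fun y _ => sum_nonneg fun z _ => hσ _ _ _
  · rw [← h₁.2.1, sum_comm]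
    refine sum_congr rfl fun y _ => ?_
    rw [sum_comm, ← hτ_xy]
    exact sum_congr rfl fun z _ => hσ_xyz (x, y) z
  · rw [← h₃.2.2, ← Fintype.sum_prod_type' (fun x y => ∑ z, σ (x, y) z w), sum_comm]
    simp only [hσ_zw]
  · calc transportCost (fun x w => ∑ y, ∑ z, σ (x, y) z w) d = E (fun p _ w => d p.1 w) := by
          simp only [transportCost, E, sum_mul, Fintype.sum_prod_type]
          refine sum_congr rfl fun x _ => ?_
          rw [sum_comm]
          exact sum_congr rfl fun y _ => sum_comm
      _ ≤ E (fun p z w => d p.1 p.2 + d z p.2 + d z w) := by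
          simp only [E]
          gcongr with p _ z _ w _
          exacts [hσ _ _ _, hquad _ _ _ _]
      _ = _ := by
          rw [← hE₁, ← hE₂, ← hE₃]
          simp only [E, mul_add, sum_add_distrib]

theorem W1_quadrilateral {P₁ P₂ Q₁ Q₂ : S → ℝ} {d : S → S → ℝ}
    (hP₁ : IsProbDist P₁) (hP₂ : IsProbDist P₂) (hQ₁ : IsProbDist Q₁) (hQ₂ : IsProbDist Q₂)
    (hd : ∀ i j, 0 ≤ d i j) (hquad : ∀ x y z w, d x w ≤ d x y + d z y + d z w) :
    W1 P₁ Q₂ d ≤ W1 P₁ Q₁ d + W1 P₂ Q₁ d + W1 P₂ Q₂ d := by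
  suffices W1 P₁ Q₂ d - W1 P₁ Q₁ d - W1 P₂ Q₁ d ≤ W1 P₂ Q₂ d by linarith
  refine le_W1 (exists_isCoupling hP₂ hQ₂) fun lam₃ h₃ => ?_
  suffices W1 P₁ Q₂ d - W1 P₁ Q₁ d - transportCost lam₃ d ≤ W1 P₂ Q₁ d by linarith
  refine le_W1 (exists_isCoupling hP₂ hQ₁) fun lam₂ h₂ => ?_
  suffices W1 P₁ Q₂ d - transportCost lam₂ d - transportCost lam₃ d ≤ W1 P₁ Q₁ d by linarith
  refine le_W1 (exists_isCoupling hP₁ hQ₁) fun lam₁ h₁ => ?_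
  obtain ⟨ν, hν, hcost⟩ := exists_isCoupling_transportCost_le_of_quadrilateral hquad h₁ h₂ h₃
  linarith [W1_le_transportCost hd hν]

end Transport

section BisimulationOperator

variable [Fintype S] [Fintype A] [Nonempty A]

theorem le_Fop (P P' : S → A → S → ℝ) (R R' : S → A → ℝ) (γ : ℝ) (d : S → S → ℝ) (a : A)
    (i j : S) : |R i a - R' j a| + γ * W1 (P i a) (P' j a) d ≤ Fop P P' R R' γ d i j :=
  le_ciSup (f := fun b => |R i b - R' j b| + γ * W1 (P i b) (P' j b) d) (Finite.bddAbove_range _) a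

variable {P P' : S → A → S → ℝ} {R R' : S → A → ℝ} {γ : ℝ} {d : S → S → ℝ}

theorem Fop_nonneg (hγ : 0 ≤ γ) (hd : ∀ i j, 0 ≤ d i j) (i j : S) : 0 ≤ Fop P P' R R' γ d i j := by
  obtain ⟨a⟩ : Nonempty A := inferInstance
  have := W1_nonneg (P i a) (P' j a) hd
  exact le_trans (by positivity) (le_Fop P P' R R' γ d a i j)

theorem Fop_quadrilateral (hγ : 0 ≤ γ) (hP : ∀ s a, IsProbDist (P s a))
    (hP' : ∀ s a, IsProbDist (P' s a)) (hd : ∀ i j, 0 ≤ d i j)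
    (hquad : ∀ x y z w, d x w ≤ d x y + d z y + d z w) (x y z w : S) :
    Fop P P' R R' γ d x w ≤
      Fop P P' R R' γ d x y + Fop P P' R R' γ d z y + Fop P P' R R' γ d z w := by
  refine ciSup_le fun a => ?_
  have hW := mul_le_mul_of_nonneg_left
    (W1_quadrilateral (hP x a) (hP z a) (hP' y a) (hP' w a) hd hquad) hγ
  linarith [abs_sub_le (R x a) (R' y a) (R' w a), abs_sub_le (R' y a) (R z a) (R' w a),
    abs_sub_comm (R' y a) (R z a), le_Fop P P' R R' γ d a x y, le_Fop P P' R R' γ d a z y,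
    le_Fop P P' R R' γ d a z w]

end BisimulationOperator

theorem DTBSM_quadrilateral_inequality [Fintype S] [Fintype A] [Nonempty A]
    (P P' : S → A → S → ℝ) (R R' : S → A → ℝ) (γ : ℝ)
    (hγ : γ ∈ Set.Ioo (0:ℝ) 1)
    (hP : ∀ s a, IsProbDist (P s a)) (hP' : ∀ s a, IsProbDist (P' s a))
    (d : ℕ → S → S → ℝ)
    (hd0 : d 0 = fun _ _ => 0)
    (hdrec : ∀ n, d (n+1) = Fop P P' R R' γ (d n)) :
    ∀ (n : ℕ) (i k : S) (j l : S),
      d n i l ≤ d n i j + d n k j + d n k l := by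
  suffices h : ∀ n, (∀ i j, 0 ≤ d n i j) ∧ ∀ x y z w, d n x w ≤ d n x y + d n z y + d n z w from
    fun n i k j l => (h n).2 i j k l
  intro n
  induction n with
  | zero => simp [hd0]
  | succ n ih =>
    rw [hdrec n]
    exact ⟨Fop_nonneg hγ.1.le ih.1, Fop_quadrilateral hγ.1.le hP hP' ih.1 ih.2⟩
end

section
/- For any policy π learned in the DT MDP, its sub-optimality in the real MDP satisfies max_i (V*_real(s_i) − V^π_real(s_i)) ≤ (2/(1−γ)²) · max_i d_TV(s_i,s_i) + ((1+γ)/(1−γ)) · max_i (V*_DT(s_i) − V^π_DT(s_i)), where d_TV(s_i,s_i) = max_a { |R(s_i,a) − R'(s_i,a)| + (γ R_max/(1−γ)) TV(P(·|s_i,a), P'(·|s_i,a)) }. -/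
open Finset Filter

variable {S A : Type*}

/-! ### Auxiliary lemmas -/

lemma abs_ciSup_sub' [Fintype A] [Nonempty A] (f g : A → ℝ) :
    |(⨆ a, f a) - (⨆ a, g a)| ≤ ⨆ a, |f a - g a| := by
  have hb : ∀ h : A → ℝ, BddAbove (Set.range h) := fun h => (Set.finite_range h).bddAbove
  rw [abs_sub_le_iff]
  constructor <;>
  · rw [sub_le_iff_le_add]
    apply ciSup_le; intro a
    have h1 := le_abs_self (f a - g a)
    have h2 := neg_abs_le (f a - g a)
    have h3 := le_ciSup (hb fun a => |f a - g a|) a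
    have h4 := le_ciSup (hb g) a
    have h5 := le_ciSup (hb f) a
    linarith

lemma TVdist_nonneg' [Fintype S] (P Q : S → ℝ) : 0 ≤ TVdist P Q := by
  unfold TVdist
  have : 0 ≤ ∑ i, |P i - Q i| := Finset.sum_nonneg fun i _ => abs_nonneg _
  linarith

lemma TVdist_comm' [Fintype S] (P Q : S → ℝ) : TVdist P Q = TVdist Q P := by
  unfold TVdist
  congr 1
  exact Finset.sum_congr rfl fun i _ => abs_sub_comm _ _

lemma sum_sub_min_eq_TV [Fintype S] (P Q : S → ℝ) (hP : IsProbDist P) (hQ : IsProbDist Q) :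
    ∑ t, (P t - min (P t) (Q t)) = TVdist P Q := by
  have h : ∀ t, P t - min (P t) (Q t) = (|P t - Q t| + (P t - Q t))/2 := by
    intro t
    rcases le_total (P t) (Q t) with h | h
    · rw [min_eq_left h, abs_of_nonpos (sub_nonpos.2 h)]; ring
    · rw [min_eq_right h, abs_of_nonneg (sub_nonneg.2 h)]; ring
  simp only [h]
  rw [← Finset.sum_div]
  unfold TVdist
  rw [Finset.sum_add_distrib, Finset.sum_sub_distrib, hP.2, hQ.2]
  ring

lemma sum_sub_min_eq_TV' [Fintype S] (P Q : S → ℝ) (hP : IsProbDist P) (hQ : IsProbDist Q) :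
    ∑ t, (Q t - min (P t) (Q t)) = TVdist P Q := by
  have h : ∀ t, Q t - min (P t) (Q t) = (|P t - Q t| - (P t - Q t))/2 := by
    intro t
    rcases le_total (P t) (Q t) with h | h
    · rw [min_eq_left h, abs_of_nonpos (sub_nonpos.2 h)]; ring
    · rw [min_eq_right h, abs_of_nonneg (sub_nonneg.2 h)]; ring
  simp only [h]
  rw [← Finset.sum_div]
  unfold TVdist
  rw [Finset.sum_sub_distrib, Finset.sum_sub_distrib, hP.2, hQ.2]
  ring

/-- one-sided weighted-average comparison with cross bound -/
lemma avg_sub_le [Fintype S] [Nonempty S] (P Q f g : S → ℝ)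
    (hP : IsProbDist P) (hQ : IsProbDist Q) (M : ℝ)
    (hcross : ∀ t t', f t - g t' ≤ M) :
    (∑ t, P t * f t) - ∑ t, Q t * g t ≤ M := by
  set c := ⨅ t, g t with hc
  have hgc : ∀ t, c ≤ g t := fun t => ciInf_le ((Set.finite_range g).bddBelow) t
  have hfc : ∀ t, f t ≤ M + c := by
    intro t
    have : f t - M ≤ c := le_ciInf fun t' => by linarith [hcross t t']
    linarith
  have h1 : (∑ t, P t * f t) ≤ M + c := by
    calc ∑ t, P t * f t ≤ ∑ t, P t * (M + c) :=
          Finset.sum_le_sum fun t _ => mul_le_mul_of_nonneg_left (hfc t) (hP.1 t)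
      _ = (∑ t, P t) * (M + c) := by rw [← Finset.sum_mul]
      _ = M + c := by rw [hP.2, one_mul]
  have h2 : c ≤ ∑ t, Q t * g t := by
    calc c = (∑ t, Q t) * c := by rw [hQ.2, one_mul]
      _ = ∑ t, Q t * c := by rw [Finset.sum_mul]
      _ ≤ ∑ t, Q t * g t :=
          Finset.sum_le_sum fun t _ => mul_le_mul_of_nonneg_left (hgc t) (hQ.1 t)
  linarith

/-- min-coupling split bound -/
lemma min_split [Fintype S] [Nonempty S] (P Q f g : S → ℝ)
    (hP : IsProbDist P) (hQ : IsProbDist Q) (Dd Mc : ℝ) (hDd : 0 ≤ Dd)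
    (hdiag : ∀ t, f t - g t ≤ Dd) (hcross : ∀ t t', f t - g t' ≤ Mc) :
    (∑ t, P t * f t) - ∑ t, Q t * g t ≤ Dd + TVdist P Q * Mc := by
  set m := fun t => min (P t) (Q t) with hm
  have hm0 : ∀ t, 0 ≤ m t := fun t => le_min (hP.1 t) (hQ.1 t)
  have hmP : ∀ t, m t ≤ P t := fun t => min_le_left _ _
  have hmQ : ∀ t, m t ≤ Q t := fun t => min_le_right _ _
  have hsP : ∑ t, (P t - m t) = TVdist P Q := sum_sub_min_eq_TV P Q hP hQ
  have hsQ : ∑ t, (Q t - m t) = TVdist P Q := sum_sub_min_eq_TV' P Q hP hQ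
  have hdec : (∑ t, P t * f t) - ∑ t, Q t * g t =
      (∑ t, m t * (f t - g t)) + ((∑ t, (P t - m t) * f t) - ∑ t, (Q t - m t) * g t) := by
    simp only [mul_sub, sub_mul, Finset.sum_sub_distrib]
    ring
  have hb1 : (∑ t, m t * (f t - g t)) ≤ Dd := by
    calc ∑ t, m t * (f t - g t) ≤ ∑ t, m t * Dd :=
          Finset.sum_le_sum fun t _ => mul_le_mul_of_nonneg_left (hdiag t) (hm0 t)
      _ = (∑ t, m t) * Dd := by rw [← Finset.sum_mul]
      _ ≤ 1 * Dd := by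
          apply mul_le_mul_of_nonneg_right _ hDd
          calc ∑ t, m t ≤ ∑ t, P t := Finset.sum_le_sum fun t _ => hmP t
            _ = 1 := hP.2
      _ = Dd := one_mul _
  have hb2 : (∑ t, (P t - m t) * f t) - ∑ t, (Q t - m t) * g t ≤ TVdist P Q * Mc := by
    set c := ⨅ t, g t with hc
    have hgc : ∀ t, c ≤ g t := fun t => ciInf_le ((Set.finite_range g).bddBelow) t
    have hfc : ∀ t, f t ≤ Mc + c := by
      intro t
      have : f t - Mc ≤ c := le_ciInf fun t' => by linarith [hcross t t']
      linarith
    have h1 : (∑ t, (P t - m t) * f t) ≤ TVdist P Q * (Mc + c) := by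
      calc ∑ t, (P t - m t) * f t ≤ ∑ t, (P t - m t) * (Mc + c) :=
            Finset.sum_le_sum fun t _ =>
              mul_le_mul_of_nonneg_left (hfc t) (by linarith [hmP t])
        _ = (∑ t, (P t - m t)) * (Mc + c) := by rw [← Finset.sum_mul]
        _ = TVdist P Q * (Mc + c) := by rw [hsP]
    have h2 : TVdist P Q * c ≤ ∑ t, (Q t - m t) * g t := by
      calc TVdist P Q * c = (∑ t, (Q t - m t)) * c := by rw [hsQ]
        _ = ∑ t, (Q t - m t) * c := by rw [Finset.sum_mul]
        _ ≤ ∑ t, (Q t - m t) * g t :=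
            Finset.sum_le_sum fun t _ =>
              mul_le_mul_of_nonneg_left (hgc t) (by linarith [hmQ t])
    have : TVdist P Q * (Mc + c) - TVdist P Q * c = TVdist P Q * Mc := by ring
    linarith
  linarith

set_option maxHeartbeats 1000000 in
theorem transfer_suboptimality_bound_TV [Fintype S] [Nonempty S] [Fintype A] [Nonempty A]
    (P P' : S → A → S → ℝ) (R R' : S → A → ℝ) (γ Rmax : ℝ)
    (hγ : γ ∈ Set.Ioo (0:ℝ) 1)
    (hP : ∀ s a, IsProbDist (P s a)) (hP' : ∀ s a, IsProbDist (P' s a))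
    (hRmax : Rmax = ⨆ i : S, ⨆ j : S, ⨆ a : A, |R i a - R' j a|)
    (π : S → A)
    (Vreal VDT Vπreal VπDT : S → ℝ)
    (hVreal : bellman P R γ Vreal = Vreal)
    (hVDT : bellman P' R' γ VDT = VDT)
    (hVπreal : ∀ s, Vπreal s = R s (π s) + γ * ∑ t, P s (π s) t * Vπreal t)
    (hVπDT : ∀ s, VπDT s = R' s (π s) + γ * ∑ t, P' s (π s) t * VπDT t)
    (dTV : S → ℝ)
    (hdTV : ∀ i, dTV i = ⨆ a : A,
      (|R i a - R' i a| + (γ * Rmax / (1 - γ)) * TVdist (P i a) (P' i a))) :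
    (⨆ i : S, (Vreal i - Vπreal i)) ≤
      (2 / (1 - γ)^2) * (⨆ i : S, dTV i) +
        ((1 + γ) / (1 - γ)) * ⨆ i : S, (VDT i - VπDT i) := by
  obtain ⟨hγ0, hγ1⟩ := hγ
  have h1γ : (0:ℝ) < 1 - γ := by linarith
  have bddA : ∀ h : A → ℝ, BddAbove (Set.range h) := fun h => (Set.finite_range h).bddAbove
  have bddS : ∀ h : S → ℝ, BddAbove (Set.range h) := fun h => (Set.finite_range h).bddAbove
  -- pointwise Bellman equations
  have hVr : ∀ i, Vreal i = ⨆ a, (R i a + γ * ∑ t, P i a t * Vreal t) :=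
    fun i => (congrFun hVreal i).symm
  have hVd : ∀ i, VDT i = ⨆ a, (R' i a + γ * ∑ t, P' i a t * VDT t) :=
    fun i => (congrFun hVDT i).symm
  -- reward bound
  have hRb : ∀ i j a, |R i a - R' j a| ≤ Rmax := by
    intro i j a
    rw [hRmax]
    calc |R i a - R' j a| ≤ ⨆ a, |R i a - R' j a| := le_ciSup (bddA fun a => |R i a - R' j a|) a
      _ ≤ ⨆ j, ⨆ a, |R i a - R' j a| := le_ciSup (bddS fun j => ⨆ a, |R i a - R' j a|) j
      _ ≤ ⨆ i, ⨆ j, ⨆ a, |R i a - R' j a| :=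
          le_ciSup (bddS fun i => ⨆ j, ⨆ a, |R i a - R' j a|) i
  have hR0 : 0 ≤ Rmax :=
    le_trans (abs_nonneg _) (hRb (Classical.arbitrary S) (Classical.arbitrary S)
      (Classical.arbitrary A))
  -- recursion solver
  have solve_rec : ∀ x a : ℝ, x ≤ a + γ * x → x ≤ a / (1 - γ) := by
    intro x a h
    rw [le_div_iff₀ h1γ]
    nlinarith
  -- abbreviations
  obtain ⟨Mv, hMveq⟩ : ∃ x : ℝ, x = ⨆ i : S, ⨆ j : S, |Vreal i - VDT j| := ⟨_, rfl⟩
  obtain ⟨Dv, hDveq⟩ : ∃ x : ℝ, x = ⨆ i : S, |Vreal i - VDT i| := ⟨_, rfl⟩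
  obtain ⟨T, hTeq⟩ : ∃ x : ℝ, x = ⨆ i : S, dTV i := ⟨_, rfl⟩
  obtain ⟨Pi, hPieq⟩ : ∃ x : ℝ, x = ⨆ i : S, (VDT i - VπDT i) := ⟨_, rfl⟩
  obtain ⟨Δ, hΔeq⟩ : ∃ x : ℝ, x = ⨆ i : S, (Vreal i - Vπreal i) := ⟨_, rfl⟩
  have hMb : ∀ i j, |Vreal i - VDT j| ≤ Mv := by
    intro i j
    rw [hMveq]
    calc |Vreal i - VDT j| ≤ ⨆ j, |Vreal i - VDT j| :=
          le_ciSup (bddS fun j => |Vreal i - VDT j|) j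
      _ ≤ ⨆ i, ⨆ j, |Vreal i - VDT j| :=
          le_ciSup (bddS fun i => ⨆ j, |Vreal i - VDT j|) i
  have hDb : ∀ i, |Vreal i - VDT i| ≤ Dv := by
    intro i; rw [hDveq]; exact le_ciSup (bddS fun i => |Vreal i - VDT i|) i
  have hDv0 : 0 ≤ Dv := le_trans (abs_nonneg _) (hDb (Classical.arbitrary S))
  have hTb : ∀ i, dTV i ≤ T := by
    intro i; rw [hTeq]; exact le_ciSup (bddS _) i
  have hdTVa : ∀ i a, |R i a - R' i a| + (γ * Rmax / (1 - γ)) * TVdist (P i a) (P' i a)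
      ≤ dTV i := by
    intro i a; rw [hdTV i]; exact le_ciSup (bddA fun a => |R i a - R' i a| + (γ * Rmax / (1 - γ)) * TVdist (P i a) (P' i a)) a
  have hT0 : 0 ≤ T := by
    have i0 := Classical.arbitrary S
    have a0 := Classical.arbitrary A
    have h1 : (0:ℝ) ≤ |R i0 a0 - R' i0 a0| + (γ * Rmax / (1 - γ)) * TVdist (P i0 a0) (P' i0 a0) :=
      add_nonneg (abs_nonneg _) (mul_nonneg (by positivity) (TVdist_nonneg' _ _))
    linarith [hdTVa i0 a0, hTb i0]
  -- cross averaged bound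
  have hXYM : ∀ (Pp Qq : S → ℝ), IsProbDist Pp → IsProbDist Qq →
      |(∑ t, Pp t * Vreal t) - ∑ t, Qq t * VDT t| ≤ Mv := by
    intro Pp Qq h1 h2
    rw [abs_sub_le_iff]
    constructor
    · exact avg_sub_le Pp Qq Vreal VDT h1 h2 Mv
        (fun t t' => (le_abs_self _).trans (hMb t t'))
    · exact avg_sub_le Qq Pp VDT Vreal h2 h1 Mv
        (fun t t' => by
          have h := hMb t' t
          have : VDT t - Vreal t' ≤ |Vreal t' - VDT t| := by
            rw [abs_sub_comm]; exact le_abs_self _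
          linarith)
  -- M recursion : Mv ≤ Rmax + γ Mv
  have hMrec : Mv ≤ Rmax + γ * Mv := by
    conv_lhs => rw [hMveq]
    refine ciSup_le fun i => ciSup_le fun j => ?_
    rw [hVr i, hVd j]
    refine le_trans (abs_ciSup_sub' _ _) (ciSup_le fun a => ?_)
    have heq : (R i a + γ * ∑ t, P i a t * Vreal t) - (R' j a + γ * ∑ t, P' j a t * VDT t)
        = (R i a - R' j a)
          + γ * ((∑ t, P i a t * Vreal t) - ∑ t, P' j a t * VDT t) := by ring
    rw [heq]
    calc |(R i a - R' j a) + γ * ((∑ t, P i a t * Vreal t) - ∑ t, P' j a t * VDT t)|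
        ≤ |R i a - R' j a| + |γ * ((∑ t, P i a t * Vreal t) - ∑ t, P' j a t * VDT t)| :=
          abs_add_le _ _
      _ = |R i a - R' j a| + γ * |(∑ t, P i a t * Vreal t) - ∑ t, P' j a t * VDT t| := by
          rw [abs_mul, abs_of_pos hγ0]
      _ ≤ Rmax + γ * Mv :=
          add_le_add (hRb i j a)
            (mul_le_mul_of_nonneg_left (hXYM _ _ (hP i a) (hP' j a)) hγ0.le)
  have hMle : Mv ≤ Rmax / (1 - γ) := solve_rec Mv Rmax hMrec
  -- D recursion : Dv ≤ T + γ Dv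
  have hDrec : Dv ≤ T + γ * Dv := by
    conv_lhs => rw [hDveq]
    refine ciSup_le fun i => ?_
    rw [hVr i, hVd i]
    refine le_trans (abs_ciSup_sub' _ _) (ciSup_le fun a => ?_)
    have heq : (R i a + γ * ∑ t, P i a t * Vreal t) - (R' i a + γ * ∑ t, P' i a t * VDT t)
        = (R i a - R' i a)
          + γ * ((∑ t, P i a t * Vreal t) - ∑ t, P' i a t * VDT t) := by ring
    rw [heq]
    have habsZ : |(∑ t, P i a t * Vreal t) - ∑ t, P' i a t * VDT t|
        ≤ Dv + TVdist (P i a) (P' i a) * Mv := by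
      rw [abs_sub_le_iff]
      constructor
      · exact min_split (P i a) (P' i a) Vreal VDT (hP i a) (hP' i a) Dv Mv hDv0
          (fun t => (le_abs_self _).trans (hDb t))
          (fun t t' => (le_abs_self _).trans (hMb t t'))
      · have h := min_split (P' i a) (P i a) VDT Vreal (hP' i a) (hP i a) Dv Mv hDv0
          (fun t => by
            have := hDb t
            have h2 : VDT t - Vreal t ≤ |Vreal t - VDT t| := by
              rw [abs_sub_comm]; exact le_abs_self _
            linarith)
          (fun t t' => by
            have := hMb t' t
            have h2 : VDT t - Vreal t' ≤ |Vreal t' - VDT t| := by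
              rw [abs_sub_comm]; exact le_abs_self _
            linarith)
        rwa [TVdist_comm'] at h
    have hTV0 := TVdist_nonneg' (P i a) (P' i a)
    have hmulTV : TVdist (P i a) (P' i a) * Mv
        ≤ TVdist (P i a) (P' i a) * (Rmax / (1 - γ)) :=
      mul_le_mul_of_nonneg_left hMle hTV0
    calc |(R i a - R' i a) + γ * ((∑ t, P i a t * Vreal t) - ∑ t, P' i a t * VDT t)|
        ≤ |R i a - R' i a| + γ * |(∑ t, P i a t * Vreal t) - ∑ t, P' i a t * VDT t| := by
          calc _ ≤ |R i a - R' i a| + |γ * (_ - _)| := abs_add_le _ _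
            _ = _ := by rw [abs_mul, abs_of_pos hγ0]
      _ ≤ |R i a - R' i a| + γ * (Dv + TVdist (P i a) (P' i a) * Mv) :=
          add_le_add le_rfl (mul_le_mul_of_nonneg_left habsZ hγ0.le)
      _ ≤ |R i a - R' i a| + γ * (Dv + TVdist (P i a) (P' i a) * (Rmax / (1 - γ))) := by
          nlinarith [hmulTV]
      _ = (|R i a - R' i a| + (γ * Rmax / (1 - γ)) * TVdist (P i a) (P' i a)) + γ * Dv := by
          ring
      _ ≤ dTV i + γ * Dv := add_le_add (hdTVa i a) le_rfl
      _ ≤ T + γ * Dv := add_le_add (hTb i) le_rfl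
  have hDle : Dv ≤ T / (1 - γ) := solve_rec Dv T hDrec
  -- VπDT ≤ VDT
  have hVDTge : ∀ i, R' i (π i) + γ * ∑ t, P' i (π i) t * VDT t ≤ VDT i := by
    intro i
    rw [hVd i]
    exact le_ciSup (bddA fun a => R' i a + γ * ∑ t, P' i a t * VDT t) (π i)
  obtain ⟨i0, hi0⟩ := Finite.exists_min (fun i => VDT i - VπDT i)
  have hsum0 : ∑ t, P' i0 (π i0) t * (VDT t - VπDT t)
      = (∑ t, P' i0 (π i0) t * VDT t) - ∑ t, P' i0 (π i0) t * VπDT t := by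
    simp only [mul_sub, Finset.sum_sub_distrib]
  have hμ0 : 0 ≤ VDT i0 - VπDT i0 := by
    have h1 := hVDTge i0
    have h2 := hVπDT i0
    have h3 : (VDT i0 - VπDT i0) ≤ ∑ t, P' i0 (π i0) t * (VDT t - VπDT t) := by
      calc VDT i0 - VπDT i0 = ∑ t, P' i0 (π i0) t * (VDT i0 - VπDT i0) := by
            rw [← Finset.sum_mul, (hP' i0 (π i0)).2, one_mul]
        _ ≤ ∑ t, P' i0 (π i0) t * (VDT t - VπDT t) :=
            Finset.sum_le_sum fun t _ =>
              mul_le_mul_of_nonneg_left (hi0 t) ((hP' i0 (π i0)).1 t)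
    rw [hsum0] at h3
    nlinarith
  have hdom : ∀ i, VπDT i ≤ VDT i := fun i => by linarith [hi0 i]
  have hPib : ∀ i, VDT i - VπDT i ≤ Pi := by
    intro i; rw [hPieq]; exact le_ciSup (bddS fun i => VDT i - VπDT i) i
  have hPi0 : 0 ≤ Pi := le_trans hμ0 (hPib i0)
  have hΔb : ∀ i, Vreal i - Vπreal i ≤ Δ := by
    intro i; rw [hΔeq]; exact le_ciSup (bddS fun i => Vreal i - Vπreal i) i
  -- pointwise bound on VπDT - Vπreal
  have hC : ∀ i, VπDT i - Vπreal i ≤ T + γ * Dv + γ * Δ := by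
    intro i
    rw [hVπDT i, hVπreal i]
    have hsplit : (∑ t, P' i (π i) t * VπDT t) - ∑ t, P i (π i) t * Vπreal t =
        (∑ t, P' i (π i) t * (VπDT t - VDT t))
        + ((∑ t, P' i (π i) t * VDT t) - ∑ t, P i (π i) t * Vreal t)
        + (∑ t, P i (π i) t * (Vreal t - Vπreal t)) := by
      simp only [mul_sub, Finset.sum_sub_distrib]
      ring
    have h1 : (∑ t, P' i (π i) t * (VπDT t - VDT t)) ≤ 0 :=
      Finset.sum_nonpos fun t _ =>
        mul_nonpos_of_nonneg_of_nonpos ((hP' i (π i)).1 t) (by linarith [hdom t])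
    have h2 : (∑ t, P' i (π i) t * VDT t) - ∑ t, P i (π i) t * Vreal t
        ≤ Dv + TVdist (P i (π i)) (P' i (π i)) * Mv := by
      have h := min_split (P' i (π i)) (P i (π i)) VDT Vreal (hP' i (π i)) (hP i (π i)) Dv Mv
        hDv0
        (fun t => by
          have := hDb t
          have h2 : VDT t - Vreal t ≤ |Vreal t - VDT t| := by
            rw [abs_sub_comm]; exact le_abs_self _
          linarith)
        (fun t t' => by
          have := hMb t' t
          have h2 : VDT t - Vreal t' ≤ |Vreal t' - VDT t| := by
            rw [abs_sub_comm]; exact le_abs_self _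
          linarith)
      rwa [TVdist_comm'] at h
    have h3 : (∑ t, P i (π i) t * (Vreal t - Vπreal t)) ≤ Δ := by
      calc ∑ t, P i (π i) t * (Vreal t - Vπreal t) ≤ ∑ t, P i (π i) t * Δ :=
            Finset.sum_le_sum fun t _ =>
              mul_le_mul_of_nonneg_left (hΔb t) ((hP i (π i)).1 t)
        _ = Δ := by rw [← Finset.sum_mul, (hP i (π i)).2, one_mul]
    have hsum : (∑ t, P' i (π i) t * VπDT t) - ∑ t, P i (π i) t * Vπreal t
        ≤ Dv + TVdist (P i (π i)) (P' i (π i)) * Mv + Δ := by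
      rw [hsplit]; linarith
    have hr : R' i (π i) - R i (π i) ≤ |R i (π i) - R' i (π i)| := by
      rw [abs_sub_comm]; exact le_abs_self _
    have hTV0 := TVdist_nonneg' (P i (π i)) (P' i (π i))
    have hmulTV : TVdist (P i (π i)) (P' i (π i)) * Mv
        ≤ TVdist (P i (π i)) (P' i (π i)) * (Rmax / (1 - γ)) :=
      mul_le_mul_of_nonneg_left hMle hTV0
    have heq : (R' i (π i) + γ * ∑ t, P' i (π i) t * VπDT t)
        - (R i (π i) + γ * ∑ t, P i (π i) t * Vπreal t)
        = (R' i (π i) - R i (π i))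
          + γ * ((∑ t, P' i (π i) t * VπDT t) - ∑ t, P i (π i) t * Vπreal t) := by ring
    rw [heq]
    calc (R' i (π i) - R i (π i))
          + γ * ((∑ t, P' i (π i) t * VπDT t) - ∑ t, P i (π i) t * Vπreal t)
        ≤ |R i (π i) - R' i (π i)|
          + γ * (Dv + TVdist (P i (π i)) (P' i (π i)) * Mv + Δ) :=
          add_le_add hr (mul_le_mul_of_nonneg_left hsum hγ0.le)
      _ ≤ |R i (π i) - R' i (π i)|
          + γ * (Dv + TVdist (P i (π i)) (P' i (π i)) * (Rmax / (1 - γ)) + Δ) := by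
          nlinarith [hmulTV]
      _ = (|R i (π i) - R' i (π i)|
            + (γ * Rmax / (1 - γ)) * TVdist (P i (π i)) (P' i (π i))) + γ * Dv + γ * Δ := by
          ring
      _ ≤ dTV i + γ * Dv + γ * Δ := by linarith [hdTVa i (π i)]
      _ ≤ T + γ * Dv + γ * Δ := by linarith [hTb i]
  -- final recursion for Δ
  have hΔrec : Δ ≤ Dv + Pi + (T + γ * Dv + γ * Δ) := by
    conv_lhs => rw [hΔeq]
    refine ciSup_le fun i => ?_
    have hA : Vreal i - VDT i ≤ Dv := (le_abs_self _).trans (hDb i)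
    linarith [hPib i, hC i]
  -- arithmetic conclusion
  have huD : Dv * (1 - γ) ≤ T := (le_div_iff₀ h1γ).1 hDle
  have key2 : (1 - γ)^2 * Δ ≤ 2 * T + (1 + γ) * (1 - γ) * Pi := by
    nlinarith [mul_le_mul_of_nonneg_left hΔrec h1γ.le, huD, hPi0, hγ0.le, h1γ.le,
      mul_nonneg (mul_nonneg hγ0.le h1γ.le) hPi0]
  rw [← hΔeq, ← hTeq, ← hPieq]
  have hre : 2 / (1 - γ)^2 * T + (1 + γ) / (1 - γ) * Pi
      = (2 * T + (1 + γ) * (1 - γ) * Pi) / (1 - γ)^2 := by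
    field_simp
  rw [hre, le_div_iff₀ (by positivity)]
  nlinarith [key2]
end
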